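/- Let G be a split graph on vertices {1,…,n} with partition into a clique C and a stable set S, let ε ∈ {+1,−1}, and let A_1, …, A_t ⊆ C with t ≥ 1. Then, as subsets of the Hansen polytope H(G), ⋂_{i=1}^t [ε, A_i] = [ε, ⋂_{i=1}^t A_i] ∩ [ε, ⋃_{i=1}^t A_i]. In particular, every intersection of same-sign type-(1)-facets can be written using at most two type-(1)-facets of that sign. -/

import Mathlib

/-- A finset of vertices is stable (independent) in `G` if no two of its elements are adjacent. -/
def IsStable {n : ℕ} (G : SimpleGraph (Fin n)) (I : Finset (Fin n)) : Prop :=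
  ∀ ⦃a⦄, a ∈ I → ∀ ⦃b⦄, b ∈ I → ¬ G.Adj a b

/-- The point `e_0 + ∑_{i ∈ I} e_i ∈ ℝ^{n+1}`. -/
def hansenVert {n : ℕ} (I : Finset (Fin n)) : Fin (n + 1) → ℝ :=
  fun j => Fin.cases 1 (fun i => if i ∈ I then 1 else 0) j

/-- The Hansen polytope of `G`. -/
def hansenPolytope {n : ℕ} (G : SimpleGraph (Fin n)) : Set (Fin (n + 1) → ℝ) :=
  convexHull ℝ
    {x | ∃ I : Finset (Fin n), IsStable G I ∧ (x = hansenVert I ∨ x = -hansenVert I)}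

/-- The face `[ε, K] = { x ∈ H(G) : ε·(−x_0 + 2·∑_{i ∈ K} x_i) = 1 }` of the Hansen
polytope, for a sign `ε` and a clique `K`. -/
def hFace {n : ℕ} (G : SimpleGraph (Fin n)) (ε : ℝ) (K : Finset (Fin n)) :
    Set (Fin (n + 1) → ℝ) :=
  {x ∈ hansenPolytope G | ε * (-(x 0) + 2 * (∑ i ∈ K, x i.succ)) = 1}

/-!
For a clique `K`, the functional `φ_K x = ε (-x₀ + 2 ∑_{i ∈ K} xᵢ)` is at most `1` on `H(G)` when
`|ε| ≤ 1`, because a stable set meets `K` in at most one vertex, so `φ_K = ±ε` at every vertex.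
The functionals are modular in `K`: `φ_K + φ_{K'} = φ_{K ∩ K'} + φ_{K ∪ K'}`. Hence for a fixed
`x ∈ H(G)` the subsets `K ⊆ C` with `φ_K x = 1` form a sublattice of the subsets of `C` that is
order-convex: closure under `∩`, `∪` gives `⊆`, and order-convexity gives `⊇`, since
`⋂ Aᵢ ⊆ Aⱼ ⊆ ⋃ Aᵢ`.
-/

open Finset

def hansenFunctional {n : ℕ} (ε : ℝ) (K : Finset (Fin n)) (x : Fin (n + 1) → ℝ) : ℝ :=
  ε * (-(x 0) + 2 * ∑ i ∈ K, x i.succ)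

section

variable {n : ℕ} {G : SimpleGraph (Fin n)} {ε : ℝ}

theorem mem_hFace {K : Finset (Fin n)} {x : Fin (n + 1) → ℝ} :
    x ∈ hFace G ε K ↔ x ∈ hansenPolytope G ∧ hansenFunctional ε K x = 1 :=
  Iff.rfl

theorem isLinearMap_hansenFunctional (ε : ℝ) (K : Finset (Fin n)) :
    IsLinearMap ℝ (hansenFunctional ε K) where
  map_add x y := by
    simp only [hansenFunctional, Pi.add_apply, sum_add_distrib]
    ring
  map_smul c x := by
    simp only [hansenFunctional, Pi.smul_apply, smul_eq_mul, ← mul_sum]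
    ring

theorem hansenFunctional_neg (ε : ℝ) (K : Finset (Fin n)) (x : Fin (n + 1) → ℝ) :
    hansenFunctional ε K (-x) = -hansenFunctional ε K x :=
  (isLinearMap_hansenFunctional ε K).mk' _ |>.map_neg x

theorem hansenFunctional_inter_add_union (ε : ℝ) (K K' : Finset (Fin n))
    (x : Fin (n + 1) → ℝ) :
    hansenFunctional ε (K ∩ K') x + hansenFunctional ε (K ∪ K') x =
      hansenFunctional ε K x + hansenFunctional ε K' x := by
  simp only [hansenFunctional]
  linear_combination (2 * ε) * sum_union_inter (s₁ := K) (s₂ := K') (f := fun i => x i.succ)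

theorem sum_hansenVert_succ (I K : Finset (Fin n)) :
    ∑ i ∈ K, hansenVert I i.succ = #(K ∩ I) := by
  simp [hansenVert]

theorem card_inter_le_one_of_isClique_of_isStable {K I : Finset (Fin n)}
    (hK : G.IsClique (K : Set (Fin n))) (hI : IsStable G I) : #(K ∩ I) ≤ 1 :=
  card_le_one.mpr fun a ha b hb => by
    rw [mem_inter] at ha hb
    by_contra hab
    exact hI ha.2 hb.2 (hK ha.1 hb.1 hab)

theorem abs_hansenFunctional_hansenVert_le (hε : |ε| ≤ 1) {K I : Finset (Fin n)}
    (hK : G.IsClique (K : Set (Fin n))) (hI : IsStable G I) :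
    |hansenFunctional ε K (hansenVert I)| ≤ 1 := by
  have h0 : hansenVert I 0 = 1 := rfl
  rcases Nat.le_one_iff_eq_zero_or_eq_one.mp (card_inter_le_one_of_isClique_of_isStable hK hI)
    with h | h <;> norm_num [hansenFunctional, h0, sum_hansenVert_succ, h, abs_mul, hε]

theorem hansenFunctional_le_one (hε : |ε| ≤ 1) {K : Finset (Fin n)}
    (hK : G.IsClique (K : Set (Fin n))) {x : Fin (n + 1) → ℝ} (hx : x ∈ hansenPolytope G) :
    hansenFunctional ε K x ≤ 1 := by
  refine convexHull_min ?_ (convex_halfSpace_le (isLinearMap_hansenFunctional ε K) 1) hx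
  rintro _ ⟨I, hI, rfl | rfl⟩
  · exact (le_abs_self _).trans (abs_hansenFunctional_hansenVert_le hε hK hI)
  · rw [Set.mem_ofPred_eq, hansenFunctional_neg]
    exact (neg_le_abs _).trans (abs_hansenFunctional_hansenVert_le hε hK hI)

end

def tightSubsets {n : ℕ} (C : Finset (Fin n)) (ε : ℝ) (x : Fin (n + 1) → ℝ) :
    Set (Finset (Fin n)) :=
  {K | K ⊆ C ∧ hansenFunctional ε K x = 1}

section

variable {n : ℕ} {G : SimpleGraph (Fin n)} {C : Finset (Fin n)} {ε : ℝ} {x : Fin (n + 1) → ℝ}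
  (hC : G.IsClique (C : Set (Fin n))) (hε : |ε| ≤ 1) (hx : x ∈ hansenPolytope G)
include hC hε hx

theorem inter_mem_tightSubsets_and_union_mem {K K' : Finset (Fin n)}
    (hK : K ∈ tightSubsets C ε x) (hK' : K' ∈ tightSubsets C ε x) :
    K ∩ K' ∈ tightSubsets C ε x ∧ K ∪ K' ∈ tightSubsets C ε x := by
  have hinter : K ∩ K' ⊆ C := inter_subset_left.trans hK.1
  have hunion : K ∪ K' ⊆ C := union_subset hK.1 hK'.1
  have h₁ := hansenFunctional_le_one hε (hC.subset hinter) hx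
  have h₂ := hansenFunctional_le_one hε (hC.subset hunion) hx
  have hsum := hansenFunctional_inter_add_union ε K K' x
  exact ⟨⟨hinter, by linarith [hK.2, hK'.2]⟩, ⟨hunion, by linarith [hK.2, hK'.2]⟩⟩

theorem supClosed_tightSubsets : SupClosed (tightSubsets C ε x) :=
  fun _ hK _ hK' => (inter_mem_tightSubsets_and_union_mem hC hε hx hK hK').2

theorem infClosed_tightSubsets : InfClosed (tightSubsets C ε x) :=
  fun _ hK _ hK' => (inter_mem_tightSubsets_and_union_mem hC hε hx hK hK').1

theorem ordConnected_tightSubsets : (tightSubsets C ε x).OrdConnected := by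
  refine ⟨fun L hL M hM K ⟨hLK, hKM⟩ => ?_⟩
  -- `K' = L ∪ (M \ K)` is the complement of `K` in the interval `[L, M]`.
  set K' := L ∪ (M \ K)
  have hK'C : K' ⊆ C := union_subset hL.1 (sdiff_subset.trans hM.1)
  have hinter : K ∩ K' = L := by
    ext a
    have := @hLK a
    simp only [K', mem_inter, mem_union, mem_sdiff]
    tauto
  have hunion : K ∪ K' = M := by
    ext a
    have := @hLK a
    have := @hKM a
    simp only [K', mem_union, mem_sdiff]
    tauto
  have hsum := hansenFunctional_inter_add_union ε K K' x
  rw [hinter, hunion, hL.2, hM.2] at hsum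
  have h₁ := hansenFunctional_le_one hε (hC.subset (hKM.trans hM.1)) hx
  have h₂ := hansenFunctional_le_one hε (hC.subset hK'C) hx
  exact ⟨hKM.trans hM.1, by linarith⟩

end

theorem hFace_iInter_general {n : ℕ} (G : SimpleGraph (Fin n))
    (C : Finset (Fin n))
    (hC : G.IsClique (↑C : Set (Fin n)))
    (t : ℕ) (ht : 1 ≤ t) (A : Fin t → Finset (Fin n)) (hA : ∀ i, A i ⊆ C)
    (ε : ℝ) (hε : ε = 1 ∨ ε = -1) :
    ⋂ i : Fin t, hFace G ε (A i) =
      hFace G ε (Finset.univ.inf A) ∩ hFace G ε (Finset.univ.sup A) := by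
  have hε' : |ε| ≤ 1 := by rcases hε with rfl | rfl <;> norm_num
  ext x
  simp only [Set.mem_iInter, Set.mem_inter_iff, mem_hFace]
  constructor
  · intro h
    have hx := (h ⟨0, ht⟩).1
    have hne : (univ : Finset (Fin t)).Nonempty := ⟨⟨0, ht⟩, mem_univ _⟩
    have hAT : ∀ i ∈ univ, A i ∈ tightSubsets C ε x := fun i _ => ⟨hA i, (h i).2⟩
    have hinf := (infClosed_tightSubsets hC hε' hx).finsetInf'_mem hne hAT
    have hsup := (supClosed_tightSubsets hC hε' hx).finsetSup'_mem hne hAT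
    rw [inf'_eq_inf] at hinf
    rw [sup'_eq_sup] at hsup
    exact ⟨⟨hx, hinf.2⟩, hx, hsup.2⟩
  · rintro ⟨⟨hx, hinf⟩, -, hsup⟩ i
    have hsupC : univ.sup A ⊆ C := Finset.sup_le fun j _ => hA j
    have hAi := (ordConnected_tightSubsets hC hε' hx).out
      ⟨(inf_le (mem_univ i)).trans (hA i), hinf⟩ ⟨hsupC, hsup⟩
      ⟨inf_le (mem_univ i), le_sup (mem_univ i)⟩
    exact ⟨hx, hAi.2⟩

/-- Any intersection of same-sign type-(1)-facets `[ε, A_i]` (with `A_i ⊆ C`, `t ≥ 1`)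
can be written using at most two of them:
`⋂_{i=1}^t [ε, A_i] = [ε, ⋂ A_i] ∩ [ε, ⋃ A_i]`. -/
theorem hFace_iInter {n : ℕ} (G : SimpleGraph (Fin n))
    (C S : Finset (Fin n)) (hdisj : Disjoint C S) (hcover : C ∪ S = Finset.univ)
    (hC : G.IsClique (↑C : Set (Fin n))) (hS : IsStable G S)
    (t : ℕ) (ht : 1 ≤ t) (A : Fin t → Finset (Fin n)) (hA : ∀ i, A i ⊆ C)
    (ε : ℝ) (hε : ε = 1 ∨ ε = -1) :
    ⋂ i : Fin t, hFace G ε (A i) =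
      hFace G ε (Finset.univ.inf A) ∩ hFace G ε (Finset.univ.sup A) :=
  hFace_iInter_general G C hC t ht A hA ε hε
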